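/- arXiv:2503.24217 — 4 statements merged into one kernel-verified Lean document; each statement's English description precedes it below -/
import Mathlib

section
/- Let G be a finite group, p a prime, g ∈ G a p-element, and χ ∈ Irr(G). If |χ(g)|² = a for some rational number a, then p divides χ(1)² − a (as an element of the ring of integers of the relevant cyclotomic field, this congruence holds in ℤ after noting χ(1)² − a ∈ ℤ when a ∈ ℤ). In particular, if χ(g) = 0 then p divides χ(1), and if |χ(g)| = 1 then gcd(χ(1), ord(g)) = 1. -/
open CategoryTheory Polynomial

private theorem aux_root_pow_eq_one {n : Type} [Fintype n] [DecidableEq n]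
    (M : Matrix n n ℂ) (N : ℕ) (hM : M ^ N = 1) (μ : ℂ)
    (hμ : μ ∈ M.charpoly.roots) : μ ^ N = 1 := by
  have hroot : M.charpoly.IsRoot μ :=
    (Polynomial.mem_roots (Matrix.charpoly_monic M).ne_zero).mp hμ
  have hdet : ((μ • 1 - M : Matrix n n ℂ)).det = 0 := by
    have h0 : ((Matrix.charmatrix M).map (Polynomial.evalRingHom μ)).det
        = Polynomial.evalRingHom μ M.charpoly :=
      (RingHom.map_det (Polynomial.evalRingHom μ) (Matrix.charmatrix M)).symm
    have hmap : (Matrix.charmatrix M).map (Polynomial.evalRingHom μ) = μ • 1 - M := by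
      ext i j
      by_cases h : i = j
      · subst h
        simp [Matrix.charmatrix_apply_eq, Matrix.smul_apply]
      · simp [Matrix.charmatrix_apply_ne _ _ _ h, Matrix.one_apply_ne h, Matrix.smul_apply]
    rw [hmap] at h0
    rw [h0]
    exact hroot
  obtain ⟨v, hv, hveq⟩ := (Matrix.exists_mulVec_eq_zero_iff).mpr hdet
  have hMv : M.mulVec v = μ • v := by
    rw [Matrix.sub_mulVec] at hveq
    have h1 : (μ • (1 : Matrix n n ℂ)).mulVec v = μ • v := by
      rw [Matrix.smul_mulVec, Matrix.one_mulVec]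
    rw [h1, sub_eq_zero] at hveq
    exact hveq.symm
  have hpow : ∀ j : ℕ, (M ^ j).mulVec v = μ ^ j • v := by
    intro j
    induction j with
    | zero => simp [Matrix.one_mulVec]
    | succ j ih =>
      rw [pow_succ', ← Matrix.mulVec_mulVec, ih, Matrix.mulVec_smul, hMv, pow_succ',
        smul_smul, mul_comm]
  have hN := hpow N
  rw [hM, Matrix.one_mulVec] at hN
  obtain ⟨i, hi⟩ := Function.ne_iff.mp hv
  have hvi : v i = (μ ^ N) * v i := by
    have := congrFun hN i
    simpa using this
  have h2 : (μ ^ N - 1) * v i = 0 := by ring_nf; linear_combination -hvi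
  rcases mul_eq_zero.mp h2 with h | h
  · exact sub_eq_zero.mp h
  · exact absurd h (by simpa using hi)

private theorem aux_congrA (A : Type*) [CommRing A] (p : ℕ) (hp : p.Prime)
    (hpu : ¬ IsUnit ((p : ℕ) : A)) (k d : ℕ) (a : ℤ)
    (s t : Multiset A)
    (hs : ∀ x ∈ s, x ^ p ^ k = 1) (ht : ∀ x ∈ t, x ^ p ^ k = 1)
    (hcs : Multiset.card s = d) (hct : Multiset.card t = d)
    (hprod : s.sum * t.sum = (a : A)) :
    (p : ℤ) ∣ ((d : ℤ) ^ 2 - a) := by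
  have hN : p ^ k ≠ 0 := (pow_pos hp.pos k).ne'
  obtain ⟨m, hm, hle⟩ := Ideal.exists_le_maximal (Ideal.span {((p : ℕ) : A)})
    (Ideal.span_singleton_ne_top hpu)
  haveI : Nontrivial (A ⧸ m) := Ideal.Quotient.nontrivial_iff.mpr hm.ne_top
  haveI : m.IsPrime := hm.isPrime
  let π : A →+* A ⧸ m := Ideal.Quotient.mk m
  have hpzero : ((p : ℕ) : A ⧸ m) = 0 := by
    rw [← map_natCast π p, Ideal.Quotient.eq_zero_iff_mem]
    exact hle (Ideal.mem_span_singleton_self _)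
  haveI : CharP (A ⧸ m) p := by
    rcases (hp.eq_one_or_self_of_dvd _ (ringChar.dvd hpzero)) with h1 | h1
    · exact absurd h1 (CharP.ringChar_ne_one)
    · exact ringChar.of_eq h1
  haveI : Fact p.Prime := ⟨hp⟩
  have key : ∀ y : A, y ^ p ^ k = 1 → π y = 1 := by
    intro y hy
    have h0 : (π y - 1) ^ p ^ k = 0 := by
      rw [sub_pow_char_pow, ← map_pow, hy, map_one, one_pow, sub_self]
    have h1 := (pow_eq_zero_iff hN).mp h0
    rwa [sub_eq_zero] at h1
  have hsum : ∀ (u : Multiset A), (∀ y ∈ u, y ^ p ^ k = 1) → Multiset.card u = d →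
      π u.sum = ((d : ℕ) : A ⧸ m) := by
    intro u hu hcard
    rw [map_multiset_sum]
    have hrep : u.map π = Multiset.replicate d 1 :=
      Multiset.eq_replicate.mpr ⟨by simp [hcard],
        fun b hb => by obtain ⟨y, hy, rfl⟩ := Multiset.mem_map.mp hb; exact key y (hu y hy)⟩
    rw [hrep, Multiset.sum_replicate, nsmul_eq_mul, mul_one]
  have hmain := congrArg π hprod
  rw [map_mul, hsum s hs hcs, hsum t ht hct, map_intCast] at hmain
  have hzero : (((d : ℤ) ^ 2 - a : ℤ) : A ⧸ m) = 0 := by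
    push_cast
    rw [← hmain]
    ring
  exact (CharP.intCast_eq_zero_iff (A ⧸ m) p _).mp hzero

private theorem aux_not_unit (p : ℕ) (hp : p.Prime) :
    ¬ IsUnit ((p : ℕ) : integralClosure ℤ ℂ) := by
  intro h
  obtain ⟨u, hu⟩ := h
  have hx : ((u⁻¹ : (integralClosure ℤ ℂ)ˣ) : integralClosure ℤ ℂ) * (p : integralClosure ℤ ℂ) = 1 := by
    rw [← hu]
    exact u.inv_mul
  have hC : ((u⁻¹ : (integralClosure ℤ ℂ)ˣ) : ℂ) * (p : ℂ) = 1 := by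
    have := congrArg (Subtype.val) hx
    exact_mod_cast this
  set x : ℂ := ((u⁻¹ : (integralClosure ℤ ℂ)ˣ) : ℂ) with hxdef
  have hint : IsIntegral ℤ x := ((u⁻¹ : (integralClosure ℤ ℂ)ˣ) : integralClosure ℤ ℂ).2
  have hp0 : (p : ℂ) ≠ 0 := by exact_mod_cast hp.ne_zero
  have hxq : x = algebraMap ℚ ℂ ((p : ℚ)⁻¹) := by
    rw [map_inv₀, map_natCast]
    field_simp
    rw [mul_comm] at hC
    linear_combination hC
  rw [hxq] at hint
  have hint2 : IsIntegral ℤ ((p : ℚ)⁻¹) :=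
    (isIntegral_algebraMap_iff (algebraMap ℚ ℂ).injective).mp hint
  obtain ⟨y, hy⟩ := IsIntegrallyClosed.isIntegral_iff.mp hint2
  have h1 : (p : ℚ) * (y : ℚ) = 1 := by
    rw [show ((y : ℤ) : ℚ) = algebraMap ℤ ℚ y from rfl, hy]
    have : (p : ℚ) ≠ 0 := by exact_mod_cast hp.ne_zero
    field_simp
  have h2 : (p : ℤ) * y = 1 := by exact_mod_cast h1
  have h3 : (p : ℤ) ∣ 1 := ⟨y, h2.symm⟩
  have h4 := Int.le_of_dvd one_pos h3
  have h5 : (2 : ℤ) ≤ p := by exact_mod_cast hp.two_le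
  omega

private theorem aux_congruence (p : ℕ) (hp : p.Prime) (k d : ℕ) (a : ℤ)
    (s t : Multiset ℂ)
    (hs : ∀ x ∈ s, x ^ p ^ k = 1) (ht : ∀ x ∈ t, x ^ p ^ k = 1)
    (hcs : Multiset.card s = d) (hct : Multiset.card t = d)
    (hprod : s.sum * t.sum = (a : ℂ)) :
    (p : ℤ) ∣ ((d : ℤ) ^ 2 - a) := by
  have hN : p ^ k ≠ 0 := (pow_pos hp.pos k).ne'
  set R := integralClosure ℤ ℂ with hR
  have hint : ∀ x : ℂ, x ^ p ^ k = 1 → IsIntegral ℤ x := by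
    intro x hx
    refine ⟨X ^ p ^ k - 1, (monic_X_pow_sub_C 1 hN), ?_⟩
    simp [hx, sub_eq_zero]
  set s' : Multiset R := s.attach.map (fun x => ⟨x.1, hint x.1 (hs x.1 x.2)⟩) with hs'
  set t' : Multiset R := t.attach.map (fun x => ⟨x.1, hint x.1 (ht x.1 x.2)⟩) with ht'
  have hs'card : Multiset.card s' = d := by simp [hs', hcs]
  have ht'card : Multiset.card t' = d := by simp [ht', hct]
  have hs'sum : ((s'.sum : R) : ℂ) = s.sum := by
    have h1 : ((s'.sum : R) : ℂ) = Subalgebra.val R s'.sum := rfl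
    rw [h1, map_multiset_sum (Subalgebra.val R), hs', Multiset.map_map]
    simp [Function.comp]
  have ht'sum : ((t'.sum : R) : ℂ) = t.sum := by
    have h1 : ((t'.sum : R) : ℂ) = Subalgebra.val R t'.sum := rfl
    rw [h1, map_multiset_sum (Subalgebra.val R), ht', Multiset.map_map]
    simp [Function.comp]
  have hs'mem : ∀ y ∈ s', y ^ p ^ k = 1 := by
    intro y hy
    obtain ⟨x, _, rfl⟩ := Multiset.mem_map.mp hy
    ext
    push_cast
    exact hs x.1 x.2
  have ht'mem : ∀ y ∈ t', y ^ p ^ k = 1 := by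
    intro y hy
    obtain ⟨x, _, rfl⟩ := Multiset.mem_map.mp hy
    ext
    push_cast
    exact ht x.1 x.2
  have hprodR : s'.sum * t'.sum = (a : R) := by
    apply Subtype.ext
    have h2 : ((s'.sum * t'.sum : R) : ℂ) = ((s'.sum : R) : ℂ) * ((t'.sum : R) : ℂ) := rfl
    rw [h2, hs'sum, ht'sum, hprod]
    simp
  exact aux_congrA R p hp (aux_not_unit p hp) k d a s' t' hs'mem ht'mem hs'card ht'card hprodR

theorem p_element_character_congruence (G : Type) [Group G] [Fintype G]
    (p : ℕ) (hp : p.Prime) (g : G) (hg : ∃ k : ℕ, orderOf g = p ^ k)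
    (V : FDRep ℂ G) (hV : Simple V) (d : ℕ)
    (hd : V.character 1 = (d : ℂ)) :
    (∀ a : ℤ, (‖V.character g‖) ^ 2 = (a : ℝ) →
      (p : ℤ) ∣ ((d : ℤ) ^ 2 - a)) ∧
    (V.character g = 0 → p ∣ d) ∧
    (‖V.character g‖ = 1 → Nat.Coprime d (orderOf g)) := by
  obtain ⟨k, hk⟩ := hg
  -- dimension is d
  have hfin : Module.finrank ℂ V = d := by
    have h1 := V.char_one
    rw [hd] at h1
    exact_mod_cast h1.symm
  -- set up the matrix
  let b := Module.finBasis ℂ V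
  let E := LinearMap.toMatrixAlgEquiv b
  let M := E (V.ρ g)
  have hMpow : M ^ p ^ k = 1 := by
    rw [← map_pow, ← map_pow, ← hk, pow_orderOf_eq_one, map_one, map_one]
  -- the character value is the sum of the roots of the charpoly
  set s : Multiset ℂ := M.charpoly.roots with hsdef
  have hchar : V.character g = s.sum := by
    show LinearMap.trace ℂ V (V.ρ g) = s.sum
    rw [LinearMap.trace_eq_matrix_trace ℂ b (V.ρ g)]
    exact Matrix.trace_eq_sum_roots_charpoly _
  have hscard : Multiset.card s = d := by
    rw [hsdef, (Polynomial.splits_iff_card_roots).mp (IsAlgClosed.splits M.charpoly),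
      Matrix.charpoly_natDegree_eq_dim]
    simpa using hfin
  have hsmem : ∀ x ∈ s, x ^ p ^ k = 1 := fun x hx => aux_root_pow_eq_one M _ hMpow x hx
  -- conjugate multiset
  set t : Multiset ℂ := s.map (starRingEnd ℂ) with htdef
  have htcard : Multiset.card t = d := by simp [htdef, hscard]
  have htmem : ∀ x ∈ t, x ^ p ^ k = 1 := by
    intro x hx
    obtain ⟨y, hy, rfl⟩ := Multiset.mem_map.mp hx
    rw [← map_pow, hsmem y hy, map_one]
  have htsum : t.sum = starRingEnd ℂ (V.character g) := by
    rw [htdef, ← map_multiset_sum, hchar]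
  -- part 1
  have part1 : ∀ a : ℤ, (‖V.character g‖) ^ 2 = (a : ℝ) →
      (p : ℤ) ∣ ((d : ℤ) ^ 2 - a) := by
    intro a ha
    have hprod : s.sum * t.sum = (a : ℂ) := by
      rw [htsum, ← hchar, Complex.mul_conj, ← Complex.sq_norm, ha]
      simp
    exact aux_congruence p hp k d a s t hsmem htmem hscard htcard hprod
  refine ⟨part1, ?_, ?_⟩
  · -- part 2
    intro h0
    have ha : (‖V.character g‖) ^ 2 = ((0 : ℤ) : ℝ) := by
      rw [h0]; simp
    have := part1 0 ha
    rw [sub_zero] at this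
    have hd2 : p ∣ d ^ 2 := by exact_mod_cast this
    exact hp.dvd_of_dvd_pow hd2
  · -- part 3
    intro h1
    have ha : (‖V.character g‖) ^ 2 = ((1 : ℤ) : ℝ) := by
      rw [h1]; simp
    have hdvd := part1 1 ha
    have hnd : ¬ p ∣ d := by
      intro hpd
      have hpd2 : (p : ℤ) ∣ (d : ℤ) ^ 2 := by
        have : (p : ℤ) ∣ (d : ℤ) := by exact_mod_cast hpd
        rw [sq]
        exact this.mul_right _
      have : (p : ℤ) ∣ 1 := by
        have := dvd_sub hpd2 hdvd
        simpa using this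
      have := Int.le_of_dvd one_pos this
      have h5 : (2 : ℤ) ≤ p := by exact_mod_cast hp.two_le
      omega
    rw [hk]
    exact Nat.Coprime.pow_right k ((hp.coprime_iff_not_dvd.mpr hnd).symm)
end

section
/- Let G be a finite non-abelian nilpotent group and χ ∈ Irr(G) non-linear. Then there exists a root of unity ε ≠ 1 such that both χ(1)·ε and χ(1)·ε̄ are character values of χ (and these are not non-negative integers). -/
open CategoryTheory

lemma aux_exists_center_ne_one (H : Type*) [Group H] [Group.IsNilpotent H] [Nontrivial H] :
    ∃ z : H, z ∈ Subgroup.center H ∧ z ≠ 1 := by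
  by_contra h
  push_neg at h
  have hc : Subgroup.center H = ⊥ := by
    rw [Subgroup.eq_bot_iff_forall]
    exact fun x hx => h x hx
  have hall : ∀ n, Subgroup.upperCentralSeries H n = ⊥ := by
    intro n
    induction n with
    | zero => exact Subgroup.upperCentralSeries_zero H
    | succ n ih =>
      rw [Subgroup.eq_bot_iff_forall]
      intro x hx
      have hxc : x ∈ Subgroup.center H := by
        rw [Subgroup.mem_center_iff]
        intro y
        have h2 := mem_upperCentralSeries_succ_iff.mp hx y
        rw [ih, Subgroup.mem_bot, commutatorElement_eq_one_iff_mul_comm] at h2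
        exact h2.symm
      rw [hc, Subgroup.mem_bot] at hxc
      exact hxc
  obtain ⟨n, hn⟩ := Group.IsNilpotent.nilpotent H
  obtain ⟨x, hx⟩ := exists_ne (1 : H)
  exact hx ((Subgroup.eq_bot_iff_forall _).mp (hall n) x (hn ▸ Subgroup.mem_top x))

theorem nilpotent_character_root_of_unity_values (G : Type) [Group G] [Fintype G]
    [Group.IsNilpotent G] (hna : ¬ ∀ a b : G, a * b = b * a)
    (V : FDRep ℂ G) (hV : Simple V) (hnl : V.character 1 ≠ 1) :
    ∃ ε : ℂ, ε ≠ 1 ∧ (∃ n : ℕ, 0 < n ∧ ε ^ n = 1) ∧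
      (∃ g : G, V.character g = V.character 1 * ε) ∧
      (∃ g : G, V.character g = V.character 1 * (starRingEnd ℂ) ε) ∧
      (∀ m : ℕ, V.character 1 * ε ≠ (m : ℂ)) ∧
      (∀ m : ℕ, V.character 1 * (starRingEnd ℂ) ε ≠ (m : ℂ)) := by
  classical
  have hchar1 : V.character 1 = (Module.finrank ℂ V : ℂ) := FDRep.char_one V
  set d : ℕ := Module.finrank ℂ V with hd
  have hd1 : d ≠ 1 := by
    intro h
    apply hnl
    rw [hchar1, h, Nat.cast_one]
  have hd0 : d ≠ 0 := by
    intro h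
    have hss : Subsingleton V := Module.finrank_zero_iff.mp h
    apply id_nonzero V
    apply Action.Hom.ext
    apply FGModuleCat.hom_ext
    apply LinearMap.ext
    intro x
    exact hss.elim _ _
  -- Schur: commuting endomorphisms are scalar
  have schur : ∀ f : V.V →ₗ[ℂ] V.V, (∀ g : G, f ∘ₗ V.ρ g = V.ρ g ∘ₗ f) →
      ∃ c : ℂ, f = c • LinearMap.id := by
    intro f hf
    let F : V ⟶ V := ⟨FGModuleCat.ofHom f, fun g => by ext x; exact LinearMap.congr_fun (hf g) x⟩
    obtain ⟨c, hc⟩ := CategoryTheory.endomorphism_simple_eq_smul_id (𝕜 := ℂ) F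
    exact ⟨c, by have := congrArg (fun F : V ⟶ V => F.hom.hom.hom) hc; exact this.symm⟩
  set u : G →* (V →ₗ[ℂ] V)ˣ := Representation.asGroupHom V.ρ with hu
  set N : Subgroup G := u.ker with hN
  -- the representation is not trivial
  have hnt : ∃ g₀ : G, V.ρ g₀ ≠ 1 := by
    by_contra h
    push_neg at h
    have hsurj : Function.Surjective (LinearMap.toSpanSingleton ℂ (V.V →ₗ[ℂ] V.V)
        LinearMap.id) := by
      intro f
      obtain ⟨c, hc⟩ := schur f (by intro g; rw [h g]; rfl)
      exact ⟨c, hc.symm⟩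
    have hr : LinearMap.range (LinearMap.toSpanSingleton ℂ (V.V →ₗ[ℂ] V.V) LinearMap.id) = ⊤ :=
      LinearMap.range_eq_top.mpr hsurj
    have hle := LinearMap.finrank_range_le (LinearMap.toSpanSingleton ℂ (V.V →ₗ[ℂ] V.V)
      LinearMap.id)
    rw [hr, finrank_top, Module.finrank_linearMap, Module.finrank_self] at hle
    have hle' : d * d ≤ 1 := hle
    have h2 : 2 ≤ d := by omega
    nlinarith
  -- the quotient by the kernel is a nontrivial nilpotent group
  haveI : Nontrivial (G ⧸ N) := by
    obtain ⟨g₀, hg₀⟩ := hnt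
    refine ⟨QuotientGroup.mk g₀, 1, ?_⟩
    intro h
    rw [QuotientGroup.eq_one_iff] at h
    apply hg₀
    rw [hN, MonoidHom.mem_ker] at h
    have : (u g₀ : V →ₗ[ℂ] V) = ((1 : (V →ₗ[ℂ] V)ˣ) : V →ₗ[ℂ] V) := by rw [h]
    rwa [hu, Representation.asGroupHom_apply] at this
  obtain ⟨z, hzc, hz1⟩ := aux_exists_center_ne_one (G ⧸ N)
  obtain ⟨g, rfl⟩ := QuotientGroup.mk_surjective z
  have hgN : g ∉ N := fun h => hz1 ((QuotientGroup.eq_one_iff g).mpr h)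
  -- ρ g commutes with everything
  have hcomm : ∀ h : G, V.ρ g ∘ₗ V.ρ h = V.ρ h ∘ₗ V.ρ g := by
    intro h
    have h1 : (QuotientGroup.mk (h * g) : G ⧸ N) = QuotientGroup.mk (g * h) := by
      have := (Subgroup.mem_center_iff.mp hzc) (QuotientGroup.mk h)
      simpa [QuotientGroup.mk_mul] using this
    have h2 : (h * g)⁻¹ * (g * h) ∈ N := QuotientGroup.eq.mp h1
    rw [hN, MonoidHom.mem_ker] at h2
    have h4 : u (h * g) = u (g * h) := by
      rwa [map_mul, map_inv, inv_mul_eq_one] at h2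
    have h5 : V.ρ (h * g) = V.ρ (g * h) := by
      have := congrArg (Units.val) h4
      rwa [hu, Representation.asGroupHom_apply, Representation.asGroupHom_apply] at this
    rw [map_mul, map_mul, Module.End.mul_eq_comp, Module.End.mul_eq_comp] at h5
    exact h5.symm
  obtain ⟨c, hc⟩ := schur (V.ρ g) hcomm
  rw [← Module.End.one_eq_id] at hc
  have hne : Nontrivial V := Module.nontrivial_of_finrank_pos (R := ℂ)
    (Nat.pos_of_ne_zero hd0)
  obtain ⟨v, hv⟩ := exists_ne (0 : V)
  -- c ≠ 1
  have hc1 : c ≠ 1 := by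
    intro h
    apply hgN
    rw [hN, MonoidHom.mem_ker]
    apply Units.ext
    rw [hu, Representation.asGroupHom_apply, hc, h, one_smul, Units.val_one]
  -- root of unity
  set n : ℕ := orderOf g with hn
  have hnpos : 0 < n := orderOf_pos g
  have hcn : c ^ n = 1 := by
    have h1 : V.ρ g ^ n = 1 := by
      rw [← map_pow, hn, pow_orderOf_eq_one, map_one]
    rw [hc, smul_pow, one_pow] at h1
    have h2 : c ^ n • v = v := by
      have := congrArg (fun f : V →ₗ[ℂ] V => f v) h1
      simpa using this
    have h4 : (c ^ n - 1) • v = 0 := by rw [sub_smul, h2, one_smul, sub_self]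
    rcases smul_eq_zero.mp h4 with h4 | h4
    · exact sub_eq_zero.mp h4
    · exact absurd h4 hv
  have hc0 : c ≠ 0 := by
    intro h
    rw [h, zero_pow hnpos.ne'] at hcn
    exact zero_ne_one hcn
  have habs : ‖c‖ = 1 := by
    have := Complex.norm_eq_one_of_pow_eq_one hcn hnpos.ne'
    exact this
  have hconj : (starRingEnd ℂ) c = c⁻¹ := (Complex.inv_eq_conj habs).symm
  have hdc : (d : ℂ) ≠ 0 := Nat.cast_ne_zero.mpr hd0
  -- character values
  have hcharg : V.character g = (d : ℂ) * c := by
    show LinearMap.trace ℂ V (V.ρ g) = (d : ℂ) * c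
    rw [hc, map_smul, LinearMap.trace_one, smul_eq_mul, mul_comm]
  have hrhoinv : V.ρ g⁻¹ = c⁻¹ • (1 : V →ₗ[ℂ] V) := by
    have h1 : V.ρ g⁻¹ * V.ρ g = 1 := by rw [← map_mul, inv_mul_cancel, map_one]
    rw [hc, mul_smul_comm, mul_one] at h1
    rw [← h1, inv_smul_smul₀ hc0]
  have hcharginv : V.character g⁻¹ = (d : ℂ) * c⁻¹ := by
    show LinearMap.trace ℂ V (V.ρ g⁻¹) = (d : ℂ) * c⁻¹
    rw [hrhoinv, map_smul, LinearMap.trace_one, smul_eq_mul, mul_comm]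
  -- not a natural number
  have key : ∀ (x : ℂ), ‖x‖ = 1 → x ≠ 1 → ∀ m : ℕ, (d : ℂ) * x ≠ (m : ℂ) := by
    intro x hx hx1 m hm
    have h1 : (d : ℝ) = (m : ℝ) := by
      have := congrArg norm hm
      rwa [norm_mul, hx, mul_one, Complex.norm_natCast, Complex.norm_natCast] at this
    have h2 : m = d := (Nat.cast_inj.mp h1).symm
    rw [h2] at hm
    exact hx1 (mul_left_cancel₀ hdc (by rw [hm, mul_one]))
  refine ⟨c, hc1, ⟨n, hnpos, hcn⟩, ⟨g, by rw [hcharg, hchar1]⟩,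
    ⟨g⁻¹, by rw [hcharginv, hchar1, hconj]⟩, ?_, ?_⟩
  · rw [hchar1]; exact key c habs hc1
  · rw [hchar1, hconj]
    apply key
    · rw [norm_inv, habs, inv_one]
    · intro h
      exact hc1 (inv_eq_one.mp h)
end

section
/- Let G be a finite group with exactly two character degrees, cd(G) = {1, m}, such that cv(G) \ cd(G) = {0, −1} (i.e. the only character values of G that are not character degrees are 0 and −1). Then G/G' is a non-trivial elementary abelian 2-group. -/
open CategoryTheory
open scoped MonoidalCategory
def cv (G : Type) [Monoid G] : Set ℂ :=
  {z | ∃ V : FDRep ℂ G, Simple V ∧ ∃ g : G, V.character g = z}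
def cd (G : Type) [Monoid G] : Set ℂ :=
  {z | ∃ V : FDRep ℂ G, Simple V ∧ V.character 1 = z}

open Module

namespace Aux
variable {G : Type} [Group G]

variable {G : Type} [Group G]

def Stable (V : FDRep ℂ G) (p : Submodule ℂ V) : Prop := ∀ (g : G) x, x ∈ p → V.ρ g x ∈ p

noncomputable def subrepρ (V : FDRep ℂ G) (p : Submodule ℂ V) (hp : Stable V p) :
    Representation ℂ G p where
  toFun g := (V.ρ g).restrict (fun x hx => hp g x hx)
  map_one' := by ext x; simp [LinearMap.restrict_apply]
  map_mul' g h := by ext x; simp [LinearMap.restrict_apply]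

lemma subrepρ_apply (V : FDRep ℂ G) (p : Submodule ℂ V) (hp : Stable V p) (g : G) (x : p) :
    (subrepρ V p hp g x : V) = V.ρ g (x : V) := rfl

noncomputable def subrep (V : FDRep ℂ G) (p : Submodule ℂ V) (hp : Stable V p) : FDRep ℂ G :=
  FDRep.of (subrepρ V p hp)

lemma subrep_ρ (V : FDRep ℂ G) (p : Submodule ℂ V) (hp : Stable V p) :
    (subrep V p hp).ρ = subrepρ V p hp := rfl

lemma finrank_subrep (V : FDRep ℂ G) (p : Submodule ℂ V) (hp : Stable V p) :
    finrank ℂ (subrep V p hp) = finrank ℂ p := rfl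

noncomputable def subrepι (V : FDRep ℂ G) (p : Submodule ℂ V) (hp : Stable V p) :
    subrep V p hp ⟶ V where
  hom := ConcreteCategory.ofHom p.subtype
  comm g := by ext x; rfl

lemma hom_ext {V W : FDRep ℂ G} {f g : V ⟶ W} (h : ∀ x : V, f.hom x = g.hom x) : f = g :=
  Action.Hom.ext (ConcreteCategory.hom_ext _ _ h)

lemma hom_comm_apply {V W : FDRep ℂ G} (f : V ⟶ W) (g : G) (x : V) :
    f.hom (V.ρ g x) = W.ρ g (f.hom x) := by
  have h := f.comm g
  have := congrArg (fun (h : V.V ⟶ W.V) => h x) h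
  simp at this; exact this

theorem simple_of_irred (V : FDRep ℂ G) (h0 : Module.finrank ℂ V ≠ 0)
    (hirr : ∀ p : Submodule ℂ V, Stable V p → p = ⊥ ∨ p = ⊤) : Simple V := by
  constructor
  intro Y f hmono
  constructor
  · rintro hiso rfl
    apply h0
    have h1 : (𝟙 V : V ⟶ V) = inv (0 : Y ⟶ V) ≫ (0 : Y ⟶ V) := (IsIso.inv_hom_id _).symm
    rw [Limits.comp_zero] at h1
    have hz : ∀ v : V, v = 0 := by
      intro v
      have := congrArg (fun (h : V ⟶ V) => h.hom v) h1
      simp at this; rw [this]; rfl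
    have : Subsingleton V := ⟨fun a b => by rw [hz a, hz b]⟩
    exact Module.finrank_zero_of_subsingleton
  · intro hf
    set fl : Y →ₗ[ℂ] V := f.hom.hom.hom with hfl
    have happ : ∀ x : Y, fl x = f.hom x := fun _ => rfl
    have hker : LinearMap.ker fl = ⊥ := by
      have hst : Stable Y (LinearMap.ker fl) := by
        intro g y hy
        rw [LinearMap.mem_ker] at hy ⊢
        rw [happ, hom_comm_apply f g y, ← happ, hy, map_zero]
      have hcomp : subrepι Y _ hst ≫ f = (0 : subrep Y _ hst ⟶ Y) ≫ f := by
        rw [Limits.zero_comp]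
        ext z
        exact z.2
      have hι := (cancel_mono f).mp hcomp
      rw [eq_bot_iff]
      intro x hx
      have := congrArg (fun (h : subrep Y _ hst ⟶ Y) => h.hom ⟨x, hx⟩) hι
      simp at this; exact this
    have hinj : Function.Injective fl := LinearMap.ker_eq_bot.mp hker
    have hrange : LinearMap.range fl = ⊤ := by
      have hstr : Stable V (LinearMap.range fl) := by
        rintro g _ ⟨y, rfl⟩
        exact ⟨Y.ρ g y, by rw [happ, happ, hom_comm_apply]⟩
      rcases hirr (LinearMap.range fl) hstr with h | h
      · exfalso
        apply hf
        apply hom_ext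
        intro x
        have : fl x ∈ LinearMap.range fl := LinearMap.mem_range_self _ x
        rw [h, Submodule.mem_bot] at this
        rw [← happ, this]
        symm
        rw [Action.zero_hom]
        rfl
      · exact h
    have hsurj : Function.Surjective fl := LinearMap.range_eq_top.mp hrange
    set e := LinearEquiv.ofBijective fl ⟨hinj, hsurj⟩ with he
    have hee : ∀ x : Y, e x = fl x := fun _ => rfl
    refine ⟨⟨{ hom := ConcreteCategory.ofHom (e.symm : V →ₗ[ℂ] Y), comm := ?_ }, ?_, ?_⟩⟩
    · intro g
      ext v
      show e.symm (V.ρ g v) = Y.ρ g (e.symm v)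
      apply hinj
      rw [← hee, ← hee]
      rw [e.apply_symm_apply]
      rw [hee, happ, hom_comm_apply f g (e.symm v), ← happ, ← hee, e.apply_symm_apply]
    · apply hom_ext
      intro x
      show e.symm (fl x) = x
      rw [← hee, e.symm_apply_apply]
    · apply hom_ext
      intro v
      show fl (e.symm v) = v
      rw [← hee, e.apply_symm_apply]

lemma exists_stable_compl [Fintype G] (V : FDRep ℂ G) (p : Submodule ℂ V) (hp : Stable V p) :
    ∃ q : Submodule ℂ V, Stable V q ∧ IsCompl p q := by
  obtain ⟨c, hc⟩ := Submodule.exists_isCompl p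
  set π0 : V →ₗ[ℂ] V := p.subtype ∘ₗ (p.projectionOnto c hc) with hπ0
  have hπ0mem : ∀ x, π0 x ∈ p := fun x => ((p.projectionOnto c hc) x).2
  have hπ0id : ∀ x ∈ p, π0 x = x := by
    intro x hx
    show (p.subtype ∘ₗ (p.projectionOnto c hc)) x = x
    rw [LinearMap.comp_apply]
    have : (p.projectionOnto c hc) x = ⟨x, hx⟩ := by
      have := Submodule.projectionOnto_apply_left hc ⟨x, hx⟩
      simpa using this
    rw [this]
    rfl
  have hN : ((Fintype.card G : ℂ)) ≠ 0 := by exact_mod_cast Fintype.card_pos.ne'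
  set T : V →ₗ[ℂ] V := (Fintype.card G : ℂ)⁻¹ • ∑ g : G, (V.ρ g) ∘ₗ π0 ∘ₗ (V.ρ g⁻¹) with hT
  have hTapp : ∀ x : V, T x = (Fintype.card G : ℂ)⁻¹ • ∑ g : G, V.ρ g (π0 (V.ρ g⁻¹ x)) := by
    intro x
    rw [hT]
    simp [LinearMap.sum_apply]
  have hTmem : ∀ x, T x ∈ p := by
    intro x
    rw [hTapp]
    exact Submodule.smul_mem _ _ (Submodule.sum_mem _ fun g _ => hp g _ (hπ0mem _))
  have hrho : ∀ (g h : G) (x : V), V.ρ g (V.ρ h x) = V.ρ (g * h) x := by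
    intro g h x
    rw [← Module.End.mul_apply, ← map_mul]
  have hTid : ∀ x ∈ p, T x = x := by
    intro x hx
    rw [hTapp]
    have : ∀ g : G, V.ρ g (π0 (V.ρ g⁻¹ x)) = x := by
      intro g
      rw [hπ0id _ (hp g⁻¹ x hx), hrho, mul_inv_cancel, map_one, Module.End.one_apply]
    rw [Finset.sum_congr rfl fun g _ => this g, Finset.sum_const, Finset.card_univ,
      ← Nat.cast_smul_eq_nsmul ℂ, smul_smul, inv_mul_cancel₀ hN, one_smul]
  have hTequi : ∀ (g : G) (x : V), T (V.ρ g x) = V.ρ g (T x) := by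
    intro g x
    rw [hTapp, hTapp, map_smul, map_sum]
    congr 1
    refine Fintype.sum_equiv (Equiv.mulLeft g⁻¹) _ _ fun h => ?_
    simp only [Equiv.coe_mulLeft]
    simp only [hrho, mul_inv_rev, inv_inv, mul_inv_cancel_left]
  refine ⟨LinearMap.ker T, ?_, ?_⟩
  · intro g x hx
    rw [LinearMap.mem_ker] at hx ⊢
    rw [hTequi, hx, map_zero]
  · constructor
    · rw [disjoint_iff]
      rw [eq_bot_iff]
      rintro x ⟨hxp, hxk⟩
      have : T x = 0 := hxk
      rw [hTid x hxp] at this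
      simp [this]
    · rw [codisjoint_iff, eq_top_iff]
      rintro x -
      have h1 : T x ∈ p := hTmem x
      have h2 : x - T x ∈ LinearMap.ker T := by
        rw [LinearMap.mem_ker, map_sub, sub_eq_zero]
        exact (hTid _ (hTmem x)).symm
      have : x = T x + (x - T x) := by abel
      rw [this]
      exact Submodule.add_mem_sup h1 h2

lemma map_subtype_invariants (V : FDRep ℂ G) (p : Submodule ℂ V) (hp : Stable V p) :
    (Representation.invariants (subrepρ V p hp)).map p.subtype
      = Representation.invariants V.ρ ⊓ p := by
  ext x
  simp only [Submodule.mem_map, Submodule.mem_inf]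
  constructor
  · rintro ⟨y, hy, rfl⟩
    refine ⟨?_, y.2⟩
    simp only [SetLike.mem_coe, Representation.mem_invariants] at hy ⊢
    intro g
    have := congrArg (Subtype.val) (hy g)
    rwa [subrepρ_apply] at this
  · rintro ⟨hxi, hxp⟩
    refine ⟨⟨x, hxp⟩, ?_, rfl⟩
    simp only [SetLike.mem_coe, Representation.mem_invariants] at hxi ⊢
    intro g
    apply Subtype.ext
    rw [subrepρ_apply]
    exact hxi g

lemma invariants_split (V : FDRep ℂ G) (p q : Submodule ℂ V)
    (hp : Stable V p) (hq : Stable V q) (hc : IsCompl p q) :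
    finrank ℂ (Representation.invariants V.ρ) =
      finrank ℂ (Representation.invariants V.ρ ⊓ p : Submodule ℂ V) +
      finrank ℂ (Representation.invariants V.ρ ⊓ q : Submodule ℂ V) := by
  set I := Representation.invariants V.ρ with hI
  have hsup : (I ⊓ p) ⊔ (I ⊓ q) = I := by
    apply le_antisymm (sup_le inf_le_left inf_le_left)
    intro x hx
    have hxT : x ∈ p ⊔ q := by rw [hc.sup_eq_top]; trivial
    obtain ⟨y, hy, z, hz, rfl⟩ := Submodule.mem_sup.mp hxT
    have hinv : ∀ g : G, V.ρ g y = y ∧ V.ρ g z = z := by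
      intro g
      have hxg : V.ρ g y + V.ρ g z = y + z := by
        have := hx g
        rwa [map_add] at this
      have h1 : V.ρ g y - y = z - V.ρ g z := by
        rw [sub_eq_sub_iff_add_eq_add]
        rw [add_comm y z] at hxg
        exact hxg
      have h2 : V.ρ g y - y ∈ p := sub_mem (hp g y hy) hy
      have h3 : V.ρ g y - y ∈ q := by
        rw [h1]; exact sub_mem hz (hq g z hz)
      have h0 : V.ρ g y - y = 0 := by
        have := hc.disjoint
        rw [Submodule.disjoint_def] at this
        exact this _ h2 h3
      constructor
      · rwa [sub_eq_zero] at h0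
      · have : z - V.ρ g z = 0 := by rw [← h1, h0]
        rw [sub_eq_zero] at this
        exact this.symm
    have hyI : y ∈ I := by
      rw [hI, Representation.mem_invariants]
      exact fun g => (hinv g).1
    have hzI : z ∈ I := by
      rw [hI, Representation.mem_invariants]
      exact fun g => (hinv g).2
    exact Submodule.add_mem_sup ⟨hyI, hy⟩ ⟨hzI, hz⟩
  have hinf : (I ⊓ p) ⊓ (I ⊓ q) = ⊥ := by
    rw [eq_bot_iff]
    rintro x ⟨⟨-, hxp⟩, ⟨-, hxq⟩⟩
    have := hc.disjoint
    rw [Submodule.disjoint_def] at this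
    simpa using this x hxp hxq
  have := Submodule.finrank_sup_add_finrank_inf_eq (I ⊓ p) (I ⊓ q)
  rw [hsup, hinf, finrank_bot] at this
  omega

theorem ind [Fintype G] (n : ℕ) (hn : 2 ≤ n)
    (H1 : ∀ W : FDRep ℂ G, Simple W → finrank ℂ W = 1 ∨ finrank ℂ W = n)
    (H2 : ∀ W : FDRep ℂ G, Simple W → finrank ℂ W = 1 → ∀ (g : G) (x : W), W.ρ g x = x) :
    ∀ (d : ℕ) (V : FDRep ℂ G), finrank ℂ V ≤ d →
      ∃ t, finrank ℂ V = finrank ℂ (Representation.invariants V.ρ) + n * t := by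
  intro d
  induction d with
  | zero =>
    intro V hle
    refine ⟨0, ?_⟩
    have h1 : finrank ℂ (Representation.invariants V.ρ) ≤ finrank ℂ V :=
      Submodule.finrank_le _
    omega
  | succ d ih =>
    intro V hle
    by_cases h0 : finrank ℂ V = 0
    · refine ⟨0, ?_⟩
      have h1 : finrank ℂ (Representation.invariants V.ρ) ≤ finrank ℂ V :=
        Submodule.finrank_le _
      omega
    · set s : Set ℕ := {k | ∃ p : Submodule ℂ V, Stable V p ∧ p ≠ ⊥ ∧ finrank ℂ p = k} with hs
      have hsne : s.Nonempty := by
        refine ⟨finrank ℂ (⊤ : Submodule ℂ V), ⊤, fun g x _ => trivial, ?_, rfl⟩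
        intro hbot
        apply h0
        have h2 : finrank ℂ (⊤ : Submodule ℂ V) = finrank ℂ V := finrank_top ℂ V
        rw [hbot, finrank_bot] at h2
        omega
      obtain ⟨p, hstp, hpne, hprank⟩ := Nat.sInf_mem hsne
      have hmin : ∀ p' : Submodule ℂ V, Stable V p' → p' ≠ ⊥ → sInf s ≤ finrank ℂ p' :=
        fun p' h1 h2 => Nat.sInf_le ⟨p', h1, h2, rfl⟩
      have hp0 : finrank ℂ p ≠ 0 := fun h => hpne (Submodule.finrank_eq_zero.mp h)
      have hsimp : Simple (subrep V p hstp) := by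
        apply simple_of_irred
        · exact hp0
        · intro q' hq'
          set q := q'.map p.subtype with hqdef
          have hq : Stable V q := by
            rintro g _ ⟨y, hy, rfl⟩
            exact ⟨(subrepρ V p hstp) g y, hq' g y hy, rfl⟩
          by_cases hqb : q = ⊥
          · left
            apply Submodule.map_injective_of_injective p.injective_subtype
            rw [← hqdef, hqb]; exact (Submodule.map_bot _).symm
          · right
            have h1 : sInf s ≤ finrank ℂ q := hmin q hq hqb
            have h2 : finrank ℂ q = finrank ℂ q' := Submodule.finrank_map_subtype_eq p q'
            have h3 : finrank ℂ q' ≤ finrank ℂ p := Submodule.finrank_le q'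
            apply Submodule.eq_top_of_finrank_eq
            have h8 : finrank ℂ (subrep V p hstp) = finrank ℂ p := finrank_subrep V p hstp
            omega
      obtain ⟨q, hstq, hcompl⟩ := exists_stable_compl V p hstp
      have hrksum : finrank ℂ V = finrank ℂ p + finrank ℂ q := by
        have h4 := Submodule.finrank_sup_add_finrank_inf_eq p q
        rw [hcompl.sup_eq_top, disjoint_iff.mp hcompl.disjoint, finrank_bot] at h4
        have htop : finrank ℂ (⊤ : Submodule ℂ V) = finrank ℂ V := finrank_top ℂ V
        omega
      obtain ⟨t, ht⟩ := ih (subrep V q hstq) (by rw [finrank_subrep]; omega)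
      rw [finrank_subrep] at ht
      have hiq : finrank ℂ (Representation.invariants ((subrep V q hstq).ρ))
          = finrank ℂ (Representation.invariants V.ρ ⊓ q : Submodule ℂ V) := by
        rw [← map_subtype_invariants V q hstq, Submodule.finrank_map_subtype_eq]
        rfl
      have hsplit := invariants_split V p q hstp hstq hcompl
      rcases H1 _ hsimp with h1 | h1
      · rw [finrank_subrep] at h1
        have hple : p ≤ Representation.invariants V.ρ := by
          intro x hx
          rw [Representation.mem_invariants]
          intro g
          have h5 := H2 _ hsimp (by rw [finrank_subrep]; exact h1) g ⟨x, hx⟩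
          rw [subrep_ρ] at h5
          exact congrArg Subtype.val h5
        have hip : Representation.invariants V.ρ ⊓ p = p := inf_eq_right.mpr hple
        refine ⟨t, ?_⟩
        rw [hip] at hsplit
        rw [hiq] at ht
        omega
      · rw [finrank_subrep] at h1
        have hip : Representation.invariants V.ρ ⊓ p = ⊥ := by
          by_contra hne
          have hstip : Stable V (Representation.invariants V.ρ ⊓ p) := by
            rintro g x ⟨h1', h2'⟩
            have hfix : V.ρ g x = x := h1' g
            exact ⟨by rw [hfix]; exact h1', by rw [hfix]; exact h2'⟩
          have hle1 : sInf s ≤ finrank ℂ (Representation.invariants V.ρ ⊓ p : Submodule ℂ V) :=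
            hmin _ hstip hne
          have heq : Representation.invariants V.ρ ⊓ p = p :=
            Submodule.eq_of_le_of_finrank_le inf_le_right (by omega)
          obtain ⟨x, hxp, hx0⟩ := Submodule.ne_bot_iff p |>.mp hpne
          have hxinv : ∀ g : G, V.ρ g x = x := by
            have hxm : x ∈ Representation.invariants V.ρ ⊓ p := heq.symm ▸ hxp
            exact fun g => hxm.1 g
          have hspan : Stable V (Submodule.span ℂ {x}) := by
            intro g y hy
            rw [Submodule.mem_span_singleton] at hy ⊢
            obtain ⟨a, rfl⟩ := hy
            exact ⟨a, by rw [map_smul, hxinv g]⟩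
          have hsp1 : sInf s ≤ 1 := by
            have h6 := hmin _ hspan (by simp [Submodule.span_singleton_eq_bot, hx0])
            rwa [finrank_span_singleton hx0] at h6
          omega
        refine ⟨t + 1, ?_⟩
        rw [hip, finrank_bot] at hsplit
        rw [hiq] at ht
        have h7 : n * (t + 1) = n * t + n := by ring
        omega



lemma bot_or_top_of_finrank_one {X : Type} [AddCommGroup X] [Module ℂ X]
    [FiniteDimensional ℂ X] (h : finrank ℂ X = 1) (p : Submodule ℂ X) : p = ⊥ ∨ p = ⊤ := by
  by_cases hb : p = ⊥
  · left; exact hb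
  · right
    apply Submodule.eq_top_of_finrank_eq
    have h1 : finrank ℂ p ≠ 0 := fun hz => hb (Submodule.finrank_eq_zero.mp hz)
    have h2 : finrank ℂ p ≤ finrank ℂ X := Submodule.finrank_le p
    omega

noncomputable def ofUnits (lam : G →* ℂˣ) : FDRep ℂ G :=
  FDRep.of
    { toFun := fun g => (lam g : ℂ) • LinearMap.id (R := ℂ) (M := ℂ)
      map_one' := by simp; rfl
      map_mul' := fun g h => by
        ext x
        simp [smul_smul, mul_comm] }

lemma ofUnits_character (lam : G →* ℂˣ) (g : G) : (ofUnits lam).character g = lam g := by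
  show LinearMap.trace ℂ _ _ = _
  rw [show (ofUnits lam).ρ g = (lam g : ℂ) • LinearMap.id from rfl]
  rw [map_smul, LinearMap.trace_id]
  have h1 : finrank ℂ (ofUnits lam) = 1 := by
    show finrank ℂ ℂ = 1
    exact finrank_self ℂ
  rw [h1]
  simp

lemma finrank_ofUnits (lam : G →* ℂˣ) : finrank ℂ (ofUnits lam) = 1 := by
  show finrank ℂ ℂ = 1
  exact finrank_self ℂ



lemma onedim_scalar (V : FDRep ℂ G) (h1 : finrank ℂ V = 1) :
    ∃ lam : G →* ℂˣ, (∀ g : G, ∀ x : V, V.ρ g x = (lam g : ℂ) • x) ∧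
      (∀ g : G, V.character g = lam g) := by
  have b : Basis (Fin 1) ℂ V := Module.finBasisOfFinrankEq ℂ V h1
  have hb0 : b 0 ≠ 0 := b.ne_zero 0
  have hrepr : ∀ x : V, x = b.repr x 0 • b 0 := by
    intro x
    conv_lhs => rw [← b.sum_repr x]
    rw [Fin.sum_univ_one]
  set c : G → ℂ := fun g => b.repr (V.ρ g (b 0)) 0 with hc
  have hscal : ∀ (g : G) (x : V), V.ρ g x = c g • x := by
    intro g x
    conv_lhs => rw [hrepr x]
    rw [map_smul, hrepr (V.ρ g (b 0))]
    conv_rhs => rw [hrepr x]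
    rw [smul_smul, smul_smul, mul_comm]
  have hc1 : c 1 = 1 := by
    have := hscal 1 (b 0)
    rw [map_one, Module.End.one_apply] at this
    have h2 : (1 : ℂ) • b 0 = c 1 • b 0 := by rw [one_smul]; exact this
    exact (smul_left_injective ℂ hb0 h2.symm)
  have hmul : ∀ g h : G, c (g * h) = c g * c h := by
    intro g h
    have h2 : V.ρ (g * h) (b 0) = (c g * c h) • b 0 := by
      rw [map_mul, Module.End.mul_apply, hscal h (b 0), map_smul, hscal g (b 0), smul_smul,
        mul_comm]
    rw [hscal (g * h) (b 0)] at h2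
    exact smul_left_injective ℂ hb0 h2
  have hcne : ∀ g : G, c g ≠ 0 := by
    intro g
    have h2 : c g * c g⁻¹ = 1 := by rw [← hmul, mul_inv_cancel, hc1]
    exact left_ne_zero_of_mul_eq_one h2
  refine ⟨MonoidHom.mk' (fun g => Units.mk0 (c g) (hcne g))
      (fun g h => Units.ext (hmul g h)), fun g x => by rw [hscal g x]; rfl, ?_⟩
  intro g
  show LinearMap.trace ℂ _ (V.ρ g) = c g
  have : V.ρ g = c g • LinearMap.id := by
    ext x
    rw [hscal g x]
    rfl
  rw [this, map_smul, LinearMap.trace_id, h1]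
  simp


end Aux

open Module in
theorem abelianization_elementary_abelian_two (G : Type) [Group G] [Fintype G]
    (m : ℂ) (hm : m ≠ 1) (hcd : cd G = {1, m})
    (hcdc : cv G \ cd G = {0, -1}) :
    (∃ x : Abelianization G, x ≠ 1) ∧ (∀ x : Abelianization G, x ^ 2 = 1) := by
  classical
  have hcv : ∀ z ∈ cv G, z = 1 ∨ z = m ∨ z = 0 ∨ z = -1 := by
    intro z hz
    by_cases hzc : z ∈ cd G
    · rw [hcd] at hzc
      simp only [Set.mem_insert_iff, Set.mem_singleton_iff] at hzc
      tauto
    · have h2 : z ∈ cv G \ cd G := ⟨hz, hzc⟩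
      rw [hcdc] at h2
      simp only [Set.mem_insert_iff, Set.mem_singleton_iff] at h2
      tauto
  have hmcd : m ∈ cd G := by
    rw [hcd]; exact Set.mem_insert_iff.mpr (Or.inr rfl)
  obtain ⟨V, hVs, hV1⟩ := hmcd
  haveI := hVs
  have hchar1 : V.character 1 = (finrank ℂ V : ℂ) := FDRep.char_one V
  set n := finrank ℂ V with hn
  have hmn : m = (n : ℂ) := by rw [← hV1, hchar1]
  have hn1 : n ≠ 1 := by
    rintro h
    apply hm
    rw [hmn, h]
    norm_num
  have hn0 : n ≠ 0 := by
    rintro h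
    have hss : Subsingleton V := Module.finrank_zero_iff.mp (hn ▸ h)
    haveI hss' : Subsingleton ↑V.V := hss
    have h10 : (𝟙 V : V ⟶ V) = 0 := Aux.hom_ext (fun x => Subsingleton.elim _ _)
    exact CategoryTheory.id_nonzero V h10
  have hn2 : 2 ≤ n := by omega
  have hcard : ((Fintype.card G : ℂ)) ≠ 0 := by exact_mod_cast Fintype.card_pos.ne'
  letI : Invertible ((Fintype.card G : ℂ)) := invertibleOfNonzero hcard
  -- every linear character takes values in {1, -1}
  have hval : ∀ (lam : G →* ℂˣ) (g : G), (lam g : ℂ) = 1 ∨ (lam g : ℂ) = -1 := by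
    intro lam g
    have hs : Simple (Aux.ofUnits lam) := by
      apply Aux.simple_of_irred
      · rw [Aux.finrank_ofUnits]; omega
      · exact fun p _ => Aux.bot_or_top_of_finrank_one (Aux.finrank_ofUnits lam) p
    have hz : ((lam g : ℂ)) ∈ cv G := ⟨Aux.ofUnits lam, hs, g, Aux.ofUnits_character lam g⟩
    rcases hcv _ hz with h | h | h | h
    · exact Or.inl h
    · exfalso
      have hpow : (lam g : ℂ) ^ (Fintype.card G) = 1 := by
        have h3 : lam (g ^ Fintype.card G) = lam g ^ Fintype.card G := map_pow lam g _
        rw [pow_card_eq_one, map_one] at h3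
        calc (lam g : ℂ) ^ (Fintype.card G) = ((lam g ^ Fintype.card G : ℂˣ) : ℂ) := by
              rw [Units.val_pow_eq_pow_val]
          _ = 1 := by rw [← h3]; rfl
      rw [h, hmn] at hpow
      have h4 : ((n ^ Fintype.card G : ℕ) : ℂ) = ((1 : ℕ) : ℂ) := by push_cast; simpa using hpow
      have h5 : n ^ Fintype.card G = 1 := Nat.cast_injective h4
      have h6 : 1 < n ^ Fintype.card G := Nat.one_lt_pow Fintype.card_pos.ne' (by omega)
      omega
    · exact absurd h (Units.ne_zero (lam g))
    · exact Or.inr h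
  constructor
  · -- non-trivial abelianization
    by_contra htriv
    push_neg at htriv
    have H1 : ∀ W : FDRep ℂ G, Simple W → finrank ℂ W = 1 ∨ finrank ℂ W = n := by
      intro W hW
      have hWc : W.character 1 ∈ cd G := ⟨W, hW, rfl⟩
      rw [hcd] at hWc
      simp only [Set.mem_insert_iff, Set.mem_singleton_iff] at hWc
      have hWchar : W.character 1 = (finrank ℂ W : ℂ) := FDRep.char_one W
      rcases hWc with h | h
      · left
        rw [hWchar] at h
        exact_mod_cast h
      · right
        rw [hWchar, hmn] at h
        exact_mod_cast h
    have H2 : ∀ W : FDRep ℂ G, Simple W → finrank ℂ W = 1 →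
        ∀ (g : G) (x : W), W.ρ g x = x := by
      intro W hW h1 g x
      obtain ⟨lam, hsc, hch⟩ := Aux.onedim_scalar W h1
      have hlam1 : lam g = 1 := by
        have h3 : lam g = Abelianization.lift lam (Abelianization.of g) :=
          (Abelianization.lift_apply_of (f := lam) g).symm
        rw [h3, htriv (Abelianization.of g), map_one]
      rw [hsc g x, hlam1]
      simp
    -- the representation V ⊗ V*
    set D := FDRep.of (Representation.dual V.ρ) with hD
    set W : FDRep ℂ G := V ⊗ D with hWdef
    have hcharW : ∀ g : G, W.character g = V.character g * V.character g⁻¹ := by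
      intro g
      rw [FDRep.char_tensor]
      rw [Pi.mul_apply]
      rw [hD, FDRep.char_dual]
    letI : Invertible ((Nat.card G : ℂ)) := invertibleOfNonzero (by exact_mod_cast Nat.card_pos.ne')
    have horth : ⅟(Fintype.card G : ℂ) • ∑ g : G, V.character g * V.character g⁻¹ = 1 := by
      have h3 := FDRep.char_orthonormal (k := ℂ) (G := G) V V
      rw [if_pos ⟨Iso.refl _⟩] at h3
      rw [invOf_eq_inv, smul_eq_mul, ← Nat.card_eq_fintype_card]
      exact h3.trans (by norm_num)
    have havg := FDRep.average_char_eq_finrank_invariants W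
    rw [Finset.sum_congr rfl (fun g _ => hcharW g), Nat.card_eq_fintype_card, ← smul_eq_mul,
      ← invOf_eq_inv, horth] at havg
    have hinv1 : finrank ℂ (Representation.invariants W.ρ) = 1 := by
      exact_mod_cast havg.symm
    have hWrank : finrank ℂ W = n * n := by
      have h3 : W.character 1 = (finrank ℂ W : ℂ) := FDRep.char_one _
      have h4 : W.character 1 = (n : ℂ) * (n : ℂ) := by
        rw [hcharW 1, inv_one, hchar1]
      rw [h4] at h3
      exact_mod_cast h3.symm
    obtain ⟨t, ht⟩ := Aux.ind n hn2 H1 H2 (finrank ℂ W) W le_rfl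
    rw [hWrank, hinv1] at ht
    have hd1 : n ∣ n * n := Dvd.intro n rfl
    have hd2 : n ∣ n * t := Dvd.intro t rfl
    have hd3 : n * n - n * t = 1 := by omega
    have hdd : n ∣ 1 := hd3 ▸ Nat.dvd_sub hd1 hd2
    have := Nat.dvd_one.mp hdd
    omega
  · -- elementary abelian 2
    intro x
    by_contra hx2
    haveI : Finite (Abelianization G) := Quotient.finite _
    haveI : NeZero ((Monoid.exponent (Abelianization G) : ℂ)) :=
      ⟨by exact_mod_cast Monoid.exponent_ne_zero_of_finite⟩
    obtain ⟨φ, hφ⟩ :=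
      CommGroup.exists_apply_ne_one_of_hasEnoughRootsOfUnity (Abelianization G) ℂ hx2
    set lam : G →* ℂˣ := φ.comp Abelianization.of with hlam
    obtain ⟨g, hg⟩ := Quotient.exists_rep x
    have hgx : Abelianization.of g = x := hg
    apply hφ
    have h3 : φ x = lam g := by rw [hlam, MonoidHom.comp_apply, hgx]
    have h4 : ((φ x : ℂ)) = 1 ∨ ((φ x : ℂ)) = -1 := by rw [h3]; exact hval lam g
    have h5 : ((φ (x ^ 2) : ℂ)) = 1 := by
      rw [map_pow]
      rw [Units.val_pow_eq_pow_val]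
      rcases h4 with h | h <;> rw [h] <;> norm_num
    exact Units.ext h5
end

section
/- Let G be a finite group and N = S₁ × ⋯ × S_k a normal subgroup with k ≥ 2, where each S_i is isomorphic to a fixed non-abelian simple group S. Suppose χ ∈ Irr(G) is rational-valued, χ restricted to N equals θ₁ × ⋯ × θ_k with each θ_i ∈ Irr(S_i) non-principal of degree d, and θ₁ takes values d, 0, a, b on S₁ with a < 0 rational and |a|, |b| < d. Then χ takes at least five distinct values on G. -/
open CategoryTheory

lemma five_le_ncard_aux {R : Set ℂ} (hR : R.Finite) (v1 v2 v3 v4 v5 : ℂ)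
    (m1 : v1 ∈ R) (m2 : v2 ∈ R) (m3 : v3 ∈ R) (m4 : v4 ∈ R) (m5 : v5 ∈ R)
    (h12 : v1 ≠ v2) (h13 : v1 ≠ v3) (h14 : v1 ≠ v4) (h15 : v1 ≠ v5)
    (h23 : v2 ≠ v3) (h24 : v2 ≠ v4) (h25 : v2 ≠ v5)
    (h34 : v3 ≠ v4) (h35 : v3 ≠ v5) (h45 : v4 ≠ v5) :
    5 ≤ R.ncard := by
  have hsub : ({v1, v2, v3, v4, v5} : Set ℂ) ⊆ R := by
    intro x hx
    simp only [Set.mem_insert_iff, Set.mem_singleton_iff] at hx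
    rcases hx with h | h | h | h | h <;> subst h <;> assumption
  have hcard : ({v1, v2, v3, v4, v5} : Set ℂ).ncard = 5 := by
    rw [Set.ncard_insert_of_notMem (by simp; tauto),
        Set.ncard_insert_of_notMem (by simp; tauto),
        Set.ncard_insert_of_notMem (by simp; tauto),
        Set.ncard_insert_of_notMem (by simpa using h45),
        Set.ncard_singleton]
  calc (5 : ℕ) = ({v1, v2, v3, v4, v5} : Set ℂ).ncard := hcard.symm
    _ ≤ R.ncard := Set.ncard_le_ncard hsub hR

theorem five_character_values_of_product_restriction
    (G S : Type) [Group G] [Fintype G] [Group S] [Fintype S]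
    (k : ℕ) (hk : 2 ≤ k)
    (φ : (Fin k → S) →* G) (hinj : Function.Injective φ)
    (hnorm : φ.range.Normal)
    (V : FDRep ℂ G) (hV : Simple V)
    (hrat : ∀ g : G, ∃ q : ℚ, V.character g = (q : ℂ))
    (θ : Fin k → S → ℂ)
    (hθirr : ∀ i, ∃ W : FDRep ℂ S, Simple W ∧ θ i = W.character)
    (hres : ∀ x : Fin k → S, V.character (φ x) = ∏ i, θ i (x i))
    (d : ℕ) (hθ1 : ∀ i, θ i 1 = (d : ℂ))
    (hθnp : ∀ i, ∃ s : S, θ i s ≠ (d : ℂ))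
    (a b : ℂ)
    (ha : ∃ q : ℚ, q < 0 ∧ a = (q : ℂ))
    (habs : ‖a‖ < d) (hbabs : ‖b‖ < d)
    (hrange : ∀ i, Set.range (θ i) = {(d : ℂ), 0, a, b})
    (hdist : ({(d : ℂ), 0, a, b} : Set ℂ).ncard = 4) :
    5 ≤ (Set.range V.character).ncard := by
  classical
  obtain ⟨q, hq, haq⟩ := ha
  -- basic arithmetic facts
  have habs' : |(q : ℝ)| < (d : ℝ) := by
    have := habs; rw [haq] at this
    rwa [show ((q : ℚ) : ℂ) = ((q : ℝ) : ℂ) by push_cast; ring, Complex.norm_real, Real.norm_eq_abs] at this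
  have hd0R : (0 : ℝ) < (d : ℝ) := lt_of_le_of_lt (abs_nonneg _) habs'
  have hdQ : (0 : ℚ) < (d : ℚ) := by exact_mod_cast hd0R
  have hqd : |q| < (d : ℚ) := by exact_mod_cast habs'
  have hdC : (d : ℂ) ≠ 0 := by
    have h : (0 : ℕ) < d := by exact_mod_cast hd0R
    exact_mod_cast h.ne'
  have ha0 : a ≠ 0 := by
    rw [haq]; exact_mod_cast hq.ne
  have had : a ≠ (d : ℂ) := by
    rw [haq]
    intro h
    have : q = (d : ℚ) := by exact_mod_cast h
    linarith [hdQ]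
  have haaD : a * a ≠ (d : ℂ) * (d : ℂ) := by
    rw [haq]
    intro h
    have : q * q = (d : ℚ) * (d : ℚ) := by exact_mod_cast h
    nlinarith [abs_nonneg q, neg_abs_le q, le_abs_self q]
  -- distinctness of b from d, 0, a
  have hle3 : ∀ x y z : ℂ, (({x, y, z} : Set ℂ)).ncard ≤ 3 := by
    intro x y z
    calc ({x, y, z} : Set ℂ).ncard ≤ ({y, z} : Set ℂ).ncard + 1 := Set.ncard_insert_le _ _
      _ ≤ ({z} : Set ℂ).ncard + 1 + 1 := Nat.add_le_add_right (Set.ncard_insert_le _ _) 1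
      _ = 3 := by rw [Set.ncard_singleton]
  have hbne : ∀ x ∈ ({(d : ℂ), 0, a} : Set ℂ), b ≠ x := by
    intro x hx hbx
    have heq : ({(d : ℂ), 0, a, b} : Set ℂ) = {(d : ℂ), 0, a} := by
      subst hbx
      apply Set.Subset.antisymm
      · intro y hy
        simp only [Set.mem_insert_iff, Set.mem_singleton_iff] at hy ⊢
        rcases hy with h | h | h | h
        · exact Or.inl h
        · exact Or.inr (Or.inl h)
        · exact Or.inr (Or.inr h)
        · subst h; simpa using hx
      · intro y hy
        simp only [Set.mem_insert_iff, Set.mem_singleton_iff] at hy ⊢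
        tauto
    rw [heq] at hdist
    have := hle3 (d : ℂ) 0 a
    omega
  have hbd : b ≠ (d : ℂ) := hbne _ (by simp)
  have hb0 : b ≠ 0 := hbne _ (by simp)
  have hba : b ≠ a := hbne _ (by simp)
  -- indices
  have h0k : 0 < k := by omega
  have h1k : 1 < k := by omega
  set i0 : Fin k := ⟨0, h0k⟩ with hi0
  set i1 : Fin k := ⟨1, h1k⟩ with hi1
  have hne : i0 ≠ i1 := by simp [hi0, hi1, Fin.ext_iff]
  -- the tail product
  set e : ℂ := ∏ _i ∈ (Finset.univ \ {i0}) \ {i1}, (d : ℂ) with he_def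
  have he : e ≠ 0 := Finset.prod_ne_zero_iff.mpr (fun _ _ => hdC)
  -- membership lemma
  have hmem : ∀ c₀ c₁ : ℂ, c₀ ∈ ({(d : ℂ), 0, a, b} : Set ℂ) →
      c₁ ∈ ({(d : ℂ), 0, a, b} : Set ℂ) →
      c₀ * c₁ * e ∈ Set.range V.character := by
    intro c₀ c₁ h₀ h₁
    rw [← hrange i0] at h₀
    rw [← hrange i1] at h₁
    obtain ⟨s₀, hs₀⟩ := h₀
    obtain ⟨s₁, hs₁⟩ := h₁
    refine ⟨φ (fun i => if i = i0 then s₀ else if i = i1 then s₁ else 1), ?_⟩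
    rw [hres]
    rw [Finset.prod_eq_mul_prod_sdiff_singleton_of_mem (Finset.mem_univ i0)]
    rw [Finset.prod_eq_mul_prod_sdiff_singleton_of_mem
      (show i1 ∈ Finset.univ \ {i0} by simp [Ne.symm hne])]
    have htail : ∏ i ∈ (Finset.univ \ {i0}) \ {i1},
        θ i (if i = i0 then s₀ else if i = i1 then s₁ else 1) = e := by
      apply Finset.prod_congr rfl
      intro i hi
      simp only [Finset.mem_sdiff, Finset.mem_singleton, Finset.mem_univ, true_and] at hi
      rw [if_neg hi.1, if_neg hi.2, hθ1]
    rw [htail, if_pos rfl, if_neg (Ne.symm hne), if_pos rfl, hs₀, hs₁]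
    ring
  have hcancel : ∀ x y : ℂ, x ≠ y → x * e ≠ y * e := by
    intro x y hxy h
    exact hxy (mul_right_cancel₀ he h)
  have hfin : (Set.range V.character).Finite := Set.finite_range _
  have memd : (d : ℂ) ∈ ({(d : ℂ), 0, a, b} : Set ℂ) := by simp
  have mem0 : (0 : ℂ) ∈ ({(d : ℂ), 0, a, b} : Set ℂ) := by simp
  have mema : a ∈ ({(d : ℂ), 0, a, b} : Set ℂ) := by simp
  have memb : b ∈ ({(d : ℂ), 0, a, b} : Set ℂ) := by simp
  have m1 := hmem _ _ memd memd
  have m2 : (0 : ℂ) ∈ Set.range V.character := by simpa using hmem _ _ mem0 mem0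
  have m3 := hmem _ _ mema memd
  have m4 := hmem _ _ mema mema
  by_cases hcase : b * (d : ℂ) = a * a
  · -- b = a²/d, real positive; use a*b*e as fifth value
    have m5 := hmem _ _ mema memb
    have hrQ : b = ((q * q / d : ℚ) : ℂ) := by
      have : b = a * a / (d : ℂ) := by
        field_simp at hcase ⊢
        linear_combination hcase
      rw [this, haq]
      push_cast
      ring
    set r : ℚ := q * q / d with hr_def
    have hq0 : q ≠ 0 := hq.ne
    have hrpos : 0 < r := by
      exact div_pos (mul_pos_of_neg_of_neg hq hq) hdQ
    apply five_le_ncard_aux hfin _ _ _ _ _ m1 m2 m3 m4 m5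
    · exact mul_ne_zero (mul_ne_zero hdC hdC) he
    · apply hcancel
      rw [haq]
      intro h
      have : (d : ℚ) * (d : ℚ) = q * (d : ℚ) := by exact_mod_cast h
      nlinarith
    · apply hcancel
      rw [haq]
      intro h
      have : (d : ℚ) * (d : ℚ) = q * q := by exact_mod_cast h
      nlinarith [abs_nonneg q, neg_abs_le q, le_abs_self q]
    · apply hcancel
      rw [haq, hrQ]
      intro h
      have : (d : ℚ) * (d : ℚ) = q * r := by exact_mod_cast h
      nlinarith
    · exact (mul_ne_zero (mul_ne_zero ha0 hdC) he).symm
    · exact (mul_ne_zero (mul_ne_zero ha0 ha0) he).symm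
    · exact (mul_ne_zero (mul_ne_zero ha0 hb0) he).symm
    · apply hcancel
      intro h
      exact had (mul_left_cancel₀ ha0 h).symm
    · apply hcancel
      intro h
      exact hbd (mul_left_cancel₀ ha0 h).symm
    · apply hcancel
      intro h
      exact hba (mul_left_cancel₀ ha0 h).symm
  · -- use b*d*e as fifth value
    have m5 := hmem _ _ memb memd
    apply five_le_ncard_aux hfin _ _ _ _ _ m1 m2 m3 m4 m5
    · exact mul_ne_zero (mul_ne_zero hdC hdC) he
    · apply hcancel
      rw [haq]
      intro h
      have : (d : ℚ) * (d : ℚ) = q * (d : ℚ) := by exact_mod_cast h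
      nlinarith
    · apply hcancel
      exact fun h => haaD (by linear_combination -h)
    · apply hcancel
      intro h
      exact hbd (mul_right_cancel₀ hdC h.symm)
    · exact (mul_ne_zero (mul_ne_zero ha0 hdC) he).symm
    · exact (mul_ne_zero (mul_ne_zero ha0 ha0) he).symm
    · exact (mul_ne_zero (mul_ne_zero hb0 hdC) he).symm
    · apply hcancel
      intro h
      exact had (mul_left_cancel₀ ha0 h).symm
    · apply hcancel
      intro h
      exact hba (mul_right_cancel₀ hdC h.symm)
    · apply hcancel
      intro h
      exact hcase (by linear_combination -h)
end
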